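/- Let (a_n)_{n≥0} be a sequence of nonnegative reals such that for some constants c > 0, 0 < a < 1, N ≥ 1: a_n ≤ c/√(n) for all n ≥ 1, and a_n ≤ (1-a)^{k-1} C for n = kN + m with k ≥ 1, 0 ≤ m < N and some constant C. Then for δ = 1/N the series δ Σ_{n≥1} a_n converges and is bounded by a constant depending only on a, c, C (uniformly in N). -/
import Mathlib

lemma group_sum (u : ℕ → ℝ) (hu : ∀ k, 0 ≤ u k) (N M : ℕ) (hN : 0 < N) :
    ∑ n ∈ Finset.range M, u (n / N) ≤ (N : ℝ) * ∑ k ∈ Finset.range M, u k := by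
  rw [Finset.sum_comp]
  refine le_trans (Finset.sum_le_sum (g := fun b => (N:ℝ) * u b) (fun b _ => ?_)) ?_
  · rw [nsmul_eq_mul]
    have hcard : ((Finset.range M).filter (fun a => a / N = b)).card ≤ N := by
      have hsub : (Finset.range M).filter (fun a => a / N = b) ⊆
          Finset.Ico (b * N) (b * N + N) := by
        intro n hn
        simp only [Finset.mem_filter, Finset.mem_range] at hn
        rw [Finset.mem_Ico]
        constructor
        · calc b * N = n / N * N := by rw [hn.2]
            _ ≤ n := Nat.div_mul_le_self n N
        · have hlt : n / N < b + 1 := by omega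
          have := (Nat.div_lt_iff_lt_mul hN).mp hlt
          calc n < (b + 1) * N := this
            _ = b * N + N := by ring
      have := Finset.card_le_card hsub
      simpa using this
    exact mul_le_mul_of_nonneg_right (by exact_mod_cast hcard) (hu b)
  · have hsub : (Finset.range M).image (fun n => n / N) ⊆ Finset.range M := by
      intro b hb
      simp only [Finset.mem_image, Finset.mem_range] at hb ⊢
      obtain ⟨n, hn, rfl⟩ := hb
      exact lt_of_le_of_lt (Nat.div_le_self n N) hn
    calc ∑ b ∈ (Finset.range M).image (fun n => n / N), (N:ℝ) * u b
        ≤ ∑ b ∈ Finset.range M, (N:ℝ) * u b :=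
          Finset.sum_le_sum_of_subset_of_nonneg hsub
            (fun b _ _ => mul_nonneg (Nat.cast_nonneg N) (hu b))
      _ = (N:ℝ) * ∑ k ∈ Finset.range M, u k := (Finset.mul_sum _ _ _).symm

/-- Uniform convergence of the stationary-profile series: if `aₙ ≤ c/√n` and
`aₙ ≤ (1-a)^{k-1} C` for `n = kN + m`, then `(1/N) Σ_{n≥1} aₙ` converges and is
bounded by a constant depending only on `a, c, C` (uniformly in `N`). -/
theorem stmt2 (a c C : ℝ) (ha : 0 < a) (ha1 : a < 1) (hc : 0 < c) :
    ∃ K : ℝ, ∀ N : ℕ, 1 ≤ N → ∀ f : ℕ → ℝ,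
      (∀ n, 0 ≤ f n) →
      (∀ n : ℕ, 1 ≤ n → f n ≤ c / Real.sqrt n) →
      (∀ k m : ℕ, 1 ≤ k → m < N → f (k * N + m) ≤ (1 - a) ^ (k - 1) * C) →
      Summable (fun n : ℕ => f (n + 1)) ∧
      (1 / (N : ℝ)) * ∑' n : ℕ, f (n + 1) ≤ K := by
  set r := 1 - a with hr
  refine ⟨c + C / (r * a), fun N hN f hf0 hfc hfg => ?_⟩
  have hNpos : 0 < N := hN
  have hNR : (0:ℝ) < N := by exact_mod_cast hNpos
  have hr0 : 0 < r := by rw [hr]; linarith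
  have hr1 : r < 1 := by rw [hr]; linarith
  have hC : 0 ≤ C := by
    have h := hfg 1 0 le_rfl hNpos
    simp at h
    exact (hf0 N).trans h
  have key : ∀ M, ∑ n ∈ Finset.range M, f (n + 1) ≤ (N:ℝ) * c + (N:ℝ) * (C / (r * a)) := by
    intro M
    have step1 : ∀ n : ℕ, f (n + 1) ≤
        (if n + 1 < N then c else 0) + r ^ ((n + 1) / N - 1) * C := by
      intro n
      by_cases h : n + 1 < N
      · simp only [h, if_pos]
        have h1 : f (n + 1) ≤ c / Real.sqrt (↑n + 1) := by
          have := hfc (n + 1) (by omega)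
          push_cast at this
          exact this
        have hsq : (1:ℝ) ≤ Real.sqrt (↑n + 1) :=
          Real.one_le_sqrt.mpr (by linarith [Nat.cast_nonneg (α := ℝ) n])
        have h2 : c / Real.sqrt (↑n + 1) ≤ c := div_le_self hc.le hsq
        have h3 : (0:ℝ) ≤ r ^ ((n + 1) / N - 1) * C := by positivity
        linarith
      · simp only [h, if_neg, not_false_iff]
        push_neg at h
        set k := (n + 1) / N with hk
        set m := (n + 1) % N with hm
        have hk1 : 1 ≤ k := (Nat.one_le_div_iff hNpos).mpr h
        have hmN : m < N := Nat.mod_lt _ hNpos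
        have heq : k * N + m = n + 1 := by
          rw [hk, hm, mul_comm]; exact Nat.div_add_mod (n + 1) N
        have := hfg k m hk1 hmN
        rw [heq] at this
        linarith
    have hA : (∑ n ∈ Finset.range M, (if n + 1 < N then c else 0)) ≤ (N:ℝ) * c := by
      rw [← Finset.sum_filter]
      rw [Finset.sum_const, nsmul_eq_mul]
      apply mul_le_mul_of_nonneg_right _ hc.le
      have hsub : (Finset.range M).filter (fun n => n + 1 < N) ⊆ Finset.range N := by
        intro n hn
        simp only [Finset.mem_filter, Finset.mem_range] at hn ⊢
        omega
      exact_mod_cast (Finset.card_le_card hsub).trans (by simp)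
    have hB : ∑ n ∈ Finset.range M, r ^ ((n + 1) / N - 1) * C ≤ (N:ℝ) * (C / (r * a)) := by
      have p1 : ∀ n : ℕ, r ^ ((n + 1) / N - 1) * C ≤ r ^ (n / N - 1) * C := by
        intro n
        apply mul_le_mul_of_nonneg_right _ hC
        apply pow_le_pow_of_le_one hr0.le hr1.le
        have : n / N ≤ (n + 1) / N := Nat.div_le_div_right (by omega)
        omega
      calc ∑ n ∈ Finset.range M, r ^ ((n + 1) / N - 1) * C
          ≤ ∑ n ∈ Finset.range M, r ^ (n / N - 1) * C :=
            Finset.sum_le_sum fun n _ => p1 n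
        _ ≤ (N:ℝ) * ∑ k ∈ Finset.range M, r ^ (k - 1) * C :=
            group_sum (fun k => r ^ (k - 1) * C) (fun k => by positivity) N M hNpos
        _ ≤ (N:ℝ) * (C / (r * a)) := by
            apply mul_le_mul_of_nonneg_left _ hNR.le
            have p2 : ∀ k : ℕ, r ^ (k - 1) * C ≤ (1 / r) * (r ^ k * C) := by
              intro k
              cases k with
              | zero =>
                  simp only [Nat.zero_sub, pow_zero, one_mul]
                  rw [div_mul_eq_mul_div, one_mul, le_div_iff₀ hr0]
                  nlinarith
              | succ k =>
                  simp only [Nat.add_sub_cancel, pow_succ]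
                  rw [div_mul_eq_mul_div, one_mul, mul_comm (r ^ k) r, mul_assoc,
                    mul_div_cancel_left₀ _ hr0.ne']
            have hgeom : (∑ k ∈ Finset.range M, r ^ k) ≤ 1 / a := by
              have hne : r ≠ 1 := by linarith
              rw [geom_sum_eq hne]
              have heq2 : (r ^ M - 1) / (r - 1) = (1 - r ^ M) / a := by
                rw [hr]
                have : (1:ℝ) - a - 1 = -a := by ring
                rw [this]
                rw [div_eq_div_iff (by simpa using ha.ne') ha.ne']
                ring
              rw [heq2, div_le_div_iff₀ ha ha]
              nlinarith [pow_nonneg hr0.le M]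
            calc ∑ k ∈ Finset.range M, r ^ (k - 1) * C
                ≤ ∑ k ∈ Finset.range M, (1 / r) * (r ^ k * C) :=
                  Finset.sum_le_sum fun k _ => p2 k
              _ = (1 / r) * ((∑ k ∈ Finset.range M, r ^ k) * C) := by
                  rw [← Finset.mul_sum, ← Finset.sum_mul]
              _ ≤ (1 / r) * ((1 / a) * C) := by
                  apply mul_le_mul_of_nonneg_left _ (by positivity)
                  exact mul_le_mul_of_nonneg_right hgeom hC
              _ = C / (r * a) := by field_simp
    calc ∑ n ∈ Finset.range M, f (n + 1)
        ≤ ∑ n ∈ Finset.range M, ((if n + 1 < N then c else 0) + r ^ ((n + 1) / N - 1) * C) :=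
          Finset.sum_le_sum fun n _ => step1 n
      _ = (∑ n ∈ Finset.range M, (if n + 1 < N then c else 0))
          + ∑ n ∈ Finset.range M, r ^ ((n + 1) / N - 1) * C := Finset.sum_add_distrib
      _ ≤ (N:ℝ) * c + (N:ℝ) * (C / (r * a)) := add_le_add hA hB
  have hsum : Summable (fun n : ℕ => f (n + 1)) :=
    summable_of_sum_range_le (fun n => hf0 _) key
  refine ⟨hsum, ?_⟩
  have ht : ∑' n : ℕ, f (n + 1) ≤ (N:ℝ) * c + (N:ℝ) * (C / (r * a)) :=
    Summable.tsum_le_of_sum_range_le hsum key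
  rw [div_mul_eq_mul_div, one_mul, div_le_iff₀ hNR]
  calc ∑' n : ℕ, f (n + 1) ≤ (N:ℝ) * c + (N:ℝ) * (C / (r * a)) := ht
    _ = (c + C / (r * a)) * N := by ring
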